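/- arXiv:2010.14754 — 4 statements merged into one kernel-verified Lean document; each statement's English description precedes it below -/
import Mathlib

section
/- For strictly increasing sequences S = {s_1 < ⋯ < s_n} and T = {t_1 < ⋯ < t_n}, the determinant R_{S,T} = det(R_{s_i t_j}) (with the convention R_{ij} = 0 when i ≥ j) is nonzero if and only if s_i < t_i for all 1 ≤ i ≤ n. -/
/-!
If `t_i ≤ s_i`, the first `i + 1` columns of `(R_{s_a t_b})` vanish outside the first `i` rows, so
every term of the determinant contains a zero entry. Conversely, if `s_i < t_i` for all `i`, the
evaluation sending each `R_{s_k t_k}` to `1` and all other generators to `0` maps the matrix to the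
identity (the pairs `(s_a, t_b)` are pairwise distinct), so its determinant is not zero.
-/

set_option synthInstance.maxHeartbeats 1000000
set_option maxHeartbeats 1000000

open MvPolynomial Finset

/-- Index type for the generators `R_{ij}`, `0 ≤ i < j`. -/
abbrev SigmaX : Type := {p : ℕ × ℕ // p.1 < p.2}

/-- The polynomial algebra `X = F₂[R_{ij} : 0 ≤ i < j]`. -/
abbrev Xalg : Type := MvPolynomial SigmaX (ZMod 2)

/-- The generator `R_{ij}` of `X` (with the convention `R_{ij} = 0` when `i ≥ j`). -/
noncomputable def Rgen (i j : ℕ) : Xalg :=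
  if h : i < j then X ⟨(i, j), h⟩ else 0

/-- The differential of `X`, determined on generators by
`d R_{ij} = ∑_{i<k<j} R_{ik} R_{kj}` and extended as an `F₂`-linear derivation. -/
noncomputable def dX : Derivation (ZMod 2) Xalg Xalg :=
  mkDerivation (ZMod 2)
    (fun p : SigmaX => ∑ k ∈ Finset.Ioo p.1.1 p.1.2, Rgen p.1.1 k * Rgen k p.1.2)

/-- The `i`-th element of a finite set of naturals, in increasing order. -/
noncomputable def enum (S : Finset ℕ) (i : Fin S.card) : ℕ := (S.orderIsoOfFin rfl i : ℕ)

/-- The determinant `R_{S,T} = det (R_{s_i t_j})`, where the finite sets `S`, `T` are viewed as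
strictly increasing sequences; by convention it is `0` if `S.card ≠ T.card`. -/
noncomputable def RST (S T : Finset ℕ) : Xalg :=
  if h : S.card = T.card then
    Matrix.det (Matrix.of fun i j : Fin S.card => Rgen (enum S i) (enum T (Fin.cast h j)))
  else 0

lemma enum_strictMono (S : Finset ℕ) : StrictMono (enum S) := fun _ _ h => by
  simpa [enum] using (S.orderIsoOfFin rfl).strictMono h

lemma Rgen_eq_zero_of_le {i j : ℕ} (h : j ≤ i) : Rgen i j = 0 :=
  dif_neg h.not_gt

lemma Equiv.Perm.exists_le_and_le_apply {n : ℕ} (σ : Equiv.Perm (Fin n)) (i : Fin n) :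
    ∃ k ≤ i, i ≤ σ k := by
  by_contra! h
  have hmaps : Set.MapsTo σ (Iic i : Set (Fin n)) (Iio i) := fun k hk =>
    mem_Iio.mpr (h k (mem_Iic.mp hk))
  have := card_le_card_of_injOn σ hmaps σ.injective.injOn
  rw [Fin.card_Iic, Fin.card_Iio] at this
  omega

lemma Matrix.det_eq_zero_of_apply_eq_zero_of_le {R : Type*} [CommRing R] {n : ℕ}
    (M : Matrix (Fin n) (Fin n) R) (i : Fin n) (h : ∀ a b, b ≤ i → i ≤ a → M a b = 0) :
    M.det = 0 := by
  rw [Matrix.det_apply]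
  refine sum_eq_zero fun σ _ => ?_
  obtain ⟨k, hki, hiσk⟩ := σ.exists_le_and_le_apply i
  have hzero : ∏ j, M (σ j) j = 0 := prod_eq_zero (mem_univ k) (h _ _ hki hiσk)
  rw [hzero, smul_zero]

section DetRgen

variable {n : ℕ} {s t : Fin n → ℕ}

lemma det_Rgen_eq_zero (hs : Monotone s) (ht : Monotone t) {i : Fin n} (hi : t i ≤ s i) :
    (Matrix.of fun a b => Rgen (s a) (t b)).det = 0 :=
  Matrix.det_eq_zero_of_apply_eq_zero_of_le _ i fun _ _ hb ha =>
    Rgen_eq_zero_of_le ((ht hb).trans (hi.trans (hs ha)))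

lemma det_Rgen_ne_zero (hs : Function.Injective s) (ht : Function.Injective t)
    (hst : ∀ i, s i < t i) : (Matrix.of fun a b => Rgen (s a) (t b)).det ≠ 0 := by
  classical
  let f : SigmaX → ZMod 2 := fun p => if ∃ k, s k = p.1.1 ∧ t k = p.1.2 then 1 else 0
  have hdiag : (eval f).mapMatrix (Matrix.of fun a b => Rgen (s a) (t b)) = 1 := by
    ext a b
    by_cases hab : a = b
    · subst hab
      simpa [Rgen, hst a, f] using ⟨a, rfl, rfl⟩
    · by_cases hlt : s a < t b
      · have hpair : ¬∃ k, s k = s a ∧ t k = t b := fun ⟨k, hk, hk'⟩ =>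
          hab ((hs hk).symm.trans (ht hk'))
        simp [Rgen, hlt, f, hpair, hab]
      · simp [Rgen, hlt, hab]
  intro h
  have := congrArg (eval f) h
  rw [RingHom.map_det, hdiag, Matrix.det_one, map_zero] at this
  exact one_ne_zero this

lemma det_Rgen_ne_zero_iff (hs : StrictMono s) (ht : StrictMono t) :
    (Matrix.of fun a b => Rgen (s a) (t b)).det ≠ 0 ↔ ∀ i, s i < t i := by
  refine ⟨fun hne i => ?_, det_Rgen_ne_zero hs.injective ht.injective⟩
  by_contra! hi
  exact hne (det_Rgen_eq_zero hs.monotone ht.monotone hi)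

end DetRgen

/-- `R_{S,T} ≠ 0` if and only if `s_i < t_i` for all `i`. -/
theorem RST_ne_zero_iff (S T : Finset ℕ) (hc : S.card = T.card) :
    RST S T ≠ 0 ↔ ∀ i : Fin S.card, enum S i < enum T (Fin.cast hc i) := by
  rw [RST, dif_pos hc]
  exact det_Rgen_ne_zero_iff (enum_strictMono S)
    ((enum_strictMono T).comp (Fin.cast_strictMono hc))
end

section
/- In the DGA X = F_2[R_{ij} : 0 ≤ i < j] with d(R_{ij}) = Σ_{i<k<j} R_{ik}R_{kj}, the differential of the determinant element satisfies d(R_{S,T}) = Σ_{k ∈ Z_{≥0} \ (S∪T)} R_{S∪{k}, T∪{k}}, where only finitely many summands are nonzero (those with min(S∪T) < k < max(S∪T)). -/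
set_option synthInstance.maxHeartbeats 1000000
set_option maxHeartbeats 1000000

open MvPolynomial Finset

lemma two_eq_zero : (2 : Xalg) = 0 := by
  have := CharP.cast_eq_zero Xalg 2
  simpa using this

lemma xneg (x : Xalg) : -x = x := by
  have h : x + x = 0 := by rw [← two_mul, two_eq_zero, zero_mul]
  exact neg_eq_of_add_eq_zero_left h

lemma units_smul_eq (u : ℤˣ) (x : Xalg) : u • x = x := by
  rcases Int.units_eq_one_or u with h | h <;> subst h
  · exact one_smul _ _
  · rw [Units.smul_def, Units.val_neg, Units.val_one, neg_one_zsmul, xneg]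

lemma det_eq {l : ℕ} (A : Matrix (Fin l) (Fin l) Xalg) :
    A.det = ∑ σ : Equiv.Perm (Fin l), ∏ i, A (σ i) i := by
  rw [Matrix.det_apply]
  exact Finset.sum_congr rfl fun σ _ => units_smul_eq _ _

lemma D_prod {ι : Type*} [DecidableEq ι] (D : Derivation (ZMod 2) Xalg Xalg)
    (s : Finset ι) (f : ι → Xalg) :
    D (∏ i ∈ s, f i) = ∑ i ∈ s, D (f i) * ∏ j ∈ s.erase i, f j := by
  induction s using Finset.induction_on with
  | empty => simp
  | insert _ _ ha ih =>
    rename_i a s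
    rw [Finset.prod_insert ha, D.leibniz, smul_eq_mul, smul_eq_mul, ih, Finset.mul_sum,
      Finset.sum_insert ha, Finset.erase_insert ha, add_comm]
    congr 1
    · exact mul_comm _ _
    · refine Finset.sum_congr rfl fun i hi => ?_
      rw [Finset.erase_insert_of_ne (fun h => ha (by rw [h]; exact hi)) , Finset.prod_insert
        (fun h => ha (Finset.mem_of_mem_erase h))]
      ring


lemma deriv_det {l : ℕ} (D : Derivation (ZMod 2) Xalg Xalg) (A : Matrix (Fin l) (Fin l) Xalg) :
    D A.det = ∑ j, (A.updateCol j fun i => D (A i j)).det := by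
  rw [det_eq, map_sum]
  have h1 : ∀ σ : Equiv.Perm (Fin l),
      D (∏ i, A (σ i) i) = ∑ j, D (A (σ j) j) * ∏ i ∈ Finset.univ.erase j, A (σ i) i :=
    fun σ => D_prod D _ _
  simp only [h1]
  rw [Finset.sum_comm]
  refine Finset.sum_congr rfl fun j _ => ?_
  rw [det_eq]
  refine Finset.sum_congr rfl fun σ _ => ?_
  rw [← Finset.mul_prod_erase Finset.univ (fun i => (A.updateCol j fun i₀ => D (A i₀ j)) (σ i) i) (Finset.mem_univ j)]
  congr 1
  · rw [Matrix.updateCol_self]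
  · exact Finset.prod_congr rfl fun i hi =>
      (Matrix.updateCol_ne (Finset.ne_of_mem_erase hi)).symm

lemma det_updateCol_sum' {l : ℕ} {ι : Type*} [DecidableEq ι]
    (A : Matrix (Fin l) (Fin l) Xalg) (j : Fin l) (s : Finset ι) (v : ι → Fin l → Xalg) :
    (A.updateCol j (fun i => ∑ k ∈ s, v k i)).det = ∑ k ∈ s, (A.updateCol j (v k)).det := by
  induction s using Finset.induction_on with
  | empty =>
    simp only [Finset.sum_empty]
    exact Matrix.det_eq_zero_of_column_eq_zero j (fun i => Matrix.updateCol_self)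
  | insert _ _ ha ih =>
    rename_i a s
    simp only [Finset.sum_insert ha]
    rw [show (fun i => v a i + ∑ k ∈ s, v k i) = (fun i => v a i) + (fun i => ∑ k ∈ s, v k i)
      from rfl, Matrix.det_updateCol_add, ih]

lemma det_updateRow_sum' {l : ℕ} {ι : Type*} [DecidableEq ι]
    (A : Matrix (Fin l) (Fin l) Xalg) (i : Fin l) (s : Finset ι) (v : ι → Fin l → Xalg) :
    (A.updateRow i (fun j => ∑ k ∈ s, v k j)).det = ∑ k ∈ s, (A.updateRow i (v k)).det := by
  induction s using Finset.induction_on with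
  | empty =>
    simp only [Finset.sum_empty]
    refine Matrix.det_eq_zero_of_row_eq_zero i (fun j => ?_)
    simp [Matrix.updateRow_self]
  | insert _ _ ha ih =>
    rename_i a s
    simp only [Finset.sum_insert ha]
    rw [show (fun j => v a j + ∑ k ∈ s, v k j) = (fun j => v a j) + (fun j => ∑ k ∈ s, v k j)
      from rfl, Matrix.det_updateRow_add, ih]

lemma det_col_single {l : ℕ} (A : Matrix (Fin l) (Fin l) Xalg) (i j : Fin l) (c : Xalg) :
    (A.updateCol j (Pi.single i c)).det = c * A.adjugate j i := by
  have h : (Pi.single i c : Fin l → Xalg) = c • (Pi.single i (1 : Xalg) : Fin l → Xalg) := by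
    ext x
    by_cases hx : x = i <;> simp [hx, Pi.single_apply]
  rw [h, Matrix.det_updateCol_smul]
  congr 1
  rw [← Matrix.det_transpose, ← Matrix.updateRow_transpose, ← Matrix.adjugate_apply,
    ← Matrix.adjugate_transpose]
  rfl

lemma det_row_single {l : ℕ} (A : Matrix (Fin l) (Fin l) Xalg) (i j : Fin l) (c : Xalg) :
    (A.updateRow i (Pi.single j c)).det = c * A.adjugate j i := by
  have h : (Pi.single j c : Fin l → Xalg) = c • (Pi.single j (1 : Xalg) : Fin l → Xalg) := by
    ext x
    by_cases hx : x = j <;> simp [hx, Pi.single_apply]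
  rw [h, Matrix.det_updateRow_smul, Matrix.adjugate_apply]

lemma rank_one_swap {l : ℕ} (A : Matrix (Fin l) (Fin l) Xalg) (u w : Fin l → Xalg) :
    ∑ j, (A.updateCol j fun i => u i * w j).det
      = ∑ i, (A.updateRow i fun j => u i * w j).det := by
  have hL : ∀ j, (A.updateCol j fun i => u i * w j).det
      = ∑ i, u i * w j * A.adjugate j i := by
    intro j
    have hdecomp : (fun i => u i * w j) = (fun i => ∑ i', Pi.single i' (u i' * w j) i) := by
      funext x
      rw [← Finset.sum_apply, Finset.univ_sum_single (fun i => u i * w j)]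
    rw [hdecomp, det_updateCol_sum']
    exact Finset.sum_congr rfl fun i _ => det_col_single A i j _
  have hR : ∀ i, (A.updateRow i fun j => u i * w j).det
      = ∑ j, u i * w j * A.adjugate j i := by
    intro i
    have hdecomp : (fun j => u i * w j) = (fun j => ∑ j', Pi.single j' (u i * w j') j) := by
      funext x
      rw [← Finset.sum_apply, Finset.univ_sum_single (fun j => u i * w j)]
    rw [hdecomp, det_updateRow_sum']
    exact Finset.sum_congr rfl fun j _ => det_row_single A i j _
  simp only [hL, hR]
  exact Finset.sum_comm


lemma Rgen_self (k : ℕ) : Rgen k k = 0 := dif_neg (lt_irrefl k)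

lemma Rgen_of_not_lt {a b : ℕ} (h : ¬ a < b) : Rgen a b = 0 := dif_neg h

lemma dX_Rgen (a b : ℕ) : dX (Rgen a b) = ∑ k ∈ Finset.Ioo a b, Rgen a k * Rgen k b := by
  by_cases h : a < b
  · rw [show Rgen a b = X ⟨(a, b), h⟩ from dif_pos h, dX, mkDerivation_X]
  · rw [Rgen_of_not_lt h, map_zero, Finset.Ioo_eq_empty h, Finset.sum_empty]

lemma dX_Rgen_range (a b M : ℕ) (hb : b ≤ M) :
    dX (Rgen a b) = ∑ k ∈ Finset.range M, Rgen a k * Rgen k b := by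
  rw [dX_Rgen]
  refine Finset.sum_subset (fun k hk => ?_) (fun k _ hk => ?_)
  · exact Finset.mem_range.2 (lt_of_lt_of_le (Finset.mem_Ioo.1 hk).2 hb)
  · rcases not_and_or.1 (fun h => hk (Finset.mem_Ioo.2 h)) with h | h
    · rw [Rgen_of_not_lt h, zero_mul]
    · rw [Rgen_of_not_lt h, mul_zero]

lemma RST_eq (S T : Finset ℕ) {n : ℕ} (hS : S.card = n) (hT : T.card = n) :
    RST S T = Matrix.det
      (Matrix.of fun i j : Fin n => Rgen (S.orderEmbOfFin hS i) (T.orderEmbOfFin hT j)) := by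
  subst hS
  rw [RST, dif_pos (hT.symm : S.card = T.card)]
  rfl

lemma insert_orderEmb (S : Finset ℕ) (k : ℕ) (hk : k ∉ S) {n : ℕ} (hS : S.card = n)
    (h1 : (insert k S).card = n + 1) :
    ∃ p : Fin (n + 1), (insert k S).orderEmbOfFin h1 p = k ∧
      ∀ i : Fin n, (insert k S).orderEmbOfFin h1 (p.succAbove i) = S.orderEmbOfFin hS i := by
  have hmem : k ∈ insert k S := Finset.mem_insert_self k S
  have : k ∈ Set.range ((insert k S).orderEmbOfFin h1) := by
    rw [Finset.range_orderEmbOfFin]; exact hmem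
  obtain ⟨p, hp⟩ := this
  refine ⟨p, hp, ?_⟩
  have huniq := Finset.orderEmbOfFin_unique (f := fun i : Fin n =>
      (insert k S).orderEmbOfFin h1 (p.succAbove i)) hS
    (fun i => by
      have hmem' := Finset.orderEmbOfFin_mem (insert k S) h1 (p.succAbove i)
      rcases Finset.mem_insert.1 hmem' with h | h
      · exfalso
        have : p.succAbove i = p := ((insert k S).orderEmbOfFin h1).injective (h.trans hp.symm)
        exact Fin.succAbove_ne p i this
      · exact h)
    (((insert k S).orderEmbOfFin h1).strictMono.comp (Fin.strictMono_succAbove p))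
  exact fun i => congrFun huniq i

lemma succAbove_comp {m : ℕ} (a b : Fin (m + 2)) (a' b' : Fin (m + 1))
    (ha' : b.succAbove a' = a) (hb' : a.succAbove b' = b) (x : Fin m) :
    a.succAbove (b'.succAbove x) = b.succAbove (a'.succAbove x) := by
  have hab : a ≠ b := by rw [← ha']; exact Fin.succAbove_ne b a'
  have hf : StrictMono (fun x : Fin m => a.succAbove (b'.succAbove x)) :=
    (Fin.strictMono_succAbove a).comp (Fin.strictMono_succAbove b')
  have hg : StrictMono (fun x : Fin m => b.succAbove (a'.succAbove x)) :=
    (Fin.strictMono_succAbove b).comp (Fin.strictMono_succAbove a')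
  set s : Finset (Fin (m + 2)) := ({a, b} : Finset (Fin (m + 2)))ᶜ with hs
  have hcard : s.card = m := by
    rw [hs, Finset.card_compl, Finset.card_pair hab]
    simp [Fintype.card_fin]
  have hfs : ∀ x, (fun x : Fin m => a.succAbove (b'.succAbove x)) x ∈ s := by
    intro x
    rw [hs, Finset.mem_compl, Finset.mem_insert, Finset.mem_singleton]
    push_neg
    constructor
    · exact Fin.succAbove_ne a (b'.succAbove x)
    · rw [← hb']
      intro h
      exact Fin.succAbove_ne b' x ((Fin.succAbove_right_injective (p := a)) h)
  have hgs : ∀ x, (fun x : Fin m => b.succAbove (a'.succAbove x)) x ∈ s := by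
    intro x
    rw [hs, Finset.mem_compl, Finset.mem_insert, Finset.mem_singleton]
    push_neg
    constructor
    · rw [← ha']
      intro h
      exact Fin.succAbove_ne a' x ((Fin.succAbove_right_injective (p := b)) h)
    · exact Fin.succAbove_ne b (a'.succAbove x)
  have h1 := Finset.orderEmbOfFin_unique hcard hfs hf
  have h2 := Finset.orderEmbOfFin_unique hcard hgs hg
  exact (congrFun h1 x).trans (congrFun h2 x).symm


lemma hneg1 : (-1 : Xalg) = 1 := xneg 1

lemma Dk_expand {m : ℕ} (A : Matrix (Fin (m + 1)) (Fin (m + 1)) Xalg)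
    (v : Fin (m + 1) → Fin (m + 1) → Xalg) (j : Fin (m + 1)) :
    (A.updateCol j fun i => v i j).det
      = ∑ i, v i j * (A.submatrix i.succAbove j.succAbove).det := by
  rw [Matrix.det_succ_column (A.updateCol j fun i => v i j) j]
  refine Finset.sum_congr rfl fun i _ => ?_
  simp only [hneg1, one_pow, one_mul]
  congr 1
  · exact Matrix.updateCol_self
  · congr 1
    refine Matrix.ext fun a b => ?_
    simp only [Matrix.submatrix_apply]
    exact Matrix.updateCol_ne (Fin.succAbove_ne j b)

lemma claimA {m : ℕ} (S T : Finset ℕ) (hS : S.card = m + 1) (hT : T.card = m + 1)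
    (k : ℕ) (hkS : k ∉ S) (hkT : k ∉ T) :
    RST (insert k S) (insert k T) =
      ∑ j : Fin (m + 1), ∑ i : Fin (m + 1),
        Rgen (S.orderEmbOfFin hS i) k * Rgen k (T.orderEmbOfFin hT j) *
          ((Matrix.of fun a b : Fin (m + 1) =>
            Rgen (S.orderEmbOfFin hS a) (T.orderEmbOfFin hT b)).submatrix
              i.succAbove j.succAbove).det := by
  have h1 : (insert k S).card = (m + 1) + 1 := by rw [Finset.card_insert_of_notMem hkS, hS]
  have h2 : (insert k T).card = (m + 1) + 1 := by rw [Finset.card_insert_of_notMem hkT, hT]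
  obtain ⟨p, hp, hps⟩ := insert_orderEmb S k hkS hS h1
  obtain ⟨q, hq, hqs⟩ := insert_orderEmb T k hkT hT h2
  rw [RST_eq _ _ h1 h2, Matrix.det_succ_row _ p]
  simp only [hneg1, one_pow, one_mul, Matrix.of_apply]
  rw [Fin.sum_univ_succAbove _ q]
  rw [show Rgen ((insert k S).orderEmbOfFin h1 p) ((insert k T).orderEmbOfFin h2 q) = 0 by
    rw [hp, hq, Rgen_self], zero_mul, zero_add]
  refine Finset.sum_congr rfl fun j _ => ?_
  obtain ⟨j'', hj''⟩ := Fin.exists_succAbove_eq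
    (show q ≠ q.succAbove j from (Fin.succAbove_ne q j).symm)
  rw [Matrix.det_succ_column _ j'']
  simp only [hneg1, one_pow, one_mul, Matrix.submatrix_apply, Matrix.of_apply]
  rw [Finset.mul_sum]
  refine Finset.sum_congr rfl fun i _ => ?_
  have hmat : (((Matrix.of fun a b : Fin (m + 2) =>
        Rgen ((insert k S).orderEmbOfFin h1 a) ((insert k T).orderEmbOfFin h2 b)).submatrix
          p.succAbove (q.succAbove j).succAbove).submatrix i.succAbove j''.succAbove)
      = (Matrix.of fun a b : Fin (m + 1) =>
          Rgen (S.orderEmbOfFin hS a) (T.orderEmbOfFin hT b)).submatrix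
            i.succAbove j.succAbove := by
    refine Matrix.ext fun x y => ?_
    simp only [Matrix.submatrix_apply, Matrix.of_apply]
    rw [hps, succAbove_comp (q.succAbove j) q j j'' rfl hj'' y, hqs]
  rw [hmat, hps, hj'', hq, hqs, hp]
  ring

lemma claimB {m : ℕ} (S T : Finset ℕ) (hS : S.card = m + 1) (hT : T.card = m + 1)
    (k : ℕ) (hk : k ∈ S ∪ T) :
    ∑ j : Fin (m + 1), ((Matrix.of fun a b : Fin (m + 1) =>
        Rgen (S.orderEmbOfFin hS a) (T.orderEmbOfFin hT b)).updateCol j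
          fun i => Rgen (S.orderEmbOfFin hS i) k * Rgen k (T.orderEmbOfFin hT j)).det = 0 := by
  set s := S.orderEmbOfFin hS
  set t := T.orderEmbOfFin hT
  set A := Matrix.of fun a b : Fin (m + 1) => Rgen (s a) (t b) with hA
  by_cases hkT : k ∈ T
  · obtain ⟨j0, hj0⟩ : ∃ j0, t j0 = k := by
      have : k ∈ Set.range t := by rw [Finset.range_orderEmbOfFin]; exact hkT
      exact this
    refine Finset.sum_eq_zero fun j _ => ?_
    by_cases hj : j = j0
    · subst hj
      refine Matrix.det_eq_zero_of_column_eq_zero j fun i => ?_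
      rw [Matrix.updateCol_self, ← hj0, Rgen_self, mul_zero]
    · have hv : (fun i => Rgen (s i) k * Rgen k (t j))
          = (Rgen k (t j)) • (fun i => A i j0) := by
        funext i
        rw [Pi.smul_apply, smul_eq_mul, hA, Matrix.of_apply, hj0, mul_comm]
      rw [hv, Matrix.det_updateCol_smul, Matrix.det_updateCol_eq_zero (Ne.symm hj),
        mul_zero]
  · have hkS : k ∈ S := (Finset.mem_union.1 hk).resolve_right hkT
    obtain ⟨i0, hi0⟩ : ∃ i0, s i0 = k := by
      have : k ∈ Set.range s := by rw [Finset.range_orderEmbOfFin]; exact hkS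
      exact this
    rw [rank_one_swap A (fun i => Rgen (s i) k) (fun j => Rgen k (t j))]
    refine Finset.sum_eq_zero fun i _ => ?_
    by_cases hi : i = i0
    · subst hi
      refine Matrix.det_eq_zero_of_row_eq_zero i fun j => ?_
      rw [Matrix.updateRow_self, ← hi0, Rgen_self, zero_mul]
    · have hv : (fun j => Rgen (s i) k * Rgen k (t j)) = (Rgen (s i) k) • (A i0) := by
        funext j
        rw [Pi.smul_apply, smul_eq_mul, hA, Matrix.of_apply, hi0]
      rw [hv, Matrix.det_updateRow_smul, Matrix.det_updateRow_eq_zero (Ne.symm hi), mul_zero]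

/-- `d R_{S,T} = ∑_{k ∉ S ∪ T} R_{S∪{k}, T∪{k}}`: the sum over all `k ∈ ℤ_{≥0} \\ (S ∪ T)` up to
any bound `M` beyond `max (S ∪ T)` (all further summands vanish, so only finitely many
summands — those with `min (S∪T) < k < max (S∪T)` — are nonzero). -/
theorem dX_RST (S T : Finset ℕ) (hc : S.card = T.card) (hne : S.Nonempty) :
    ∀ M : ℕ, (∀ a ∈ S ∪ T, a < M) →
      dX (RST S T) = ∑ k ∈ Finset.range M \ (S ∪ T), RST (insert k S) (insert k T) := by
  intro M hM
  obtain ⟨m, hm⟩ : ∃ m, S.card = m + 1 :=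
    ⟨S.card - 1, (Nat.succ_pred_eq_of_pos (Finset.card_pos.2 hne)).symm⟩
  have hT : T.card = m + 1 := by rw [← hc]; exact hm
  set s := S.orderEmbOfFin hm
  set t := T.orderEmbOfFin hT
  set A := Matrix.of fun a b : Fin (m + 1) => Rgen (s a) (t b) with hA
  rw [RST_eq S T hm hT, deriv_det dX A]
  have hstep : ∀ j : Fin (m + 1), (A.updateCol j fun i => dX (A i j)).det
      = ∑ k ∈ Finset.range M,
          (A.updateCol j fun i => Rgen (s i) k * Rgen k (t j)).det := by
    intro j
    have hfn : (fun i => dX (A i j))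
        = fun i => ∑ k ∈ Finset.range M, Rgen (s i) k * Rgen k (t j) := by
      funext i
      rw [show A i j = Rgen (s i) (t j) from rfl]
      exact dX_Rgen_range _ _ M (le_of_lt (hM _ (Finset.mem_union_right S
        (Finset.orderEmbOfFin_mem T hT j))))
    rw [hfn]
    exact det_updateCol_sum' A j (Finset.range M) (fun k i => Rgen (s i) k * Rgen k (t j))
  simp only [hstep]
  rw [Finset.sum_comm]
  rw [← Finset.sum_subset (Finset.sdiff_subset)
    (fun k hk1 hk2 => claimB S T hm hT k (by
      by_contra h
      exact hk2 (Finset.mem_sdiff.2 ⟨hk1, h⟩)))]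
  refine Finset.sum_congr rfl fun k hk => ?_
  have hkST : k ∉ S ∪ T := (Finset.mem_sdiff.1 hk).2
  have hkS : k ∉ S := fun h => hkST (Finset.mem_union_left _ h)
  have hkT : k ∉ T := fun h => hkST (Finset.mem_union_right _ h)
  rw [claimA S T hm hT k hkS hkT]
  exact Finset.sum_congr rfl fun j _ =>
    Dk_expand A (fun i j => Rgen (s i) k * Rgen k (t j)) j
end

section
/- The map r : X → X[m,n] defined on generators by r(R_{ij}) = R_{ij} if m ≤ i < j ≤ n and r(R_{ij}) = 0 otherwise is a retraction of differential graded algebras (a DGA map restricting to the identity on X[m,n]); consequently the induced map HX[m,n] → HX in homology is injective. -/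
set_option synthInstance.maxHeartbeats 1000000
set_option maxHeartbeats 1000000

open MvPolynomial Finset

/-- Index type for the generators `R_{ij}`, `m ≤ i < j ≤ n`, of `X[m,n]`. -/
abbrev SigmaXmn (m n : ℕ) : Type := {p : ℕ × ℕ // m ≤ p.1 ∧ p.1 < p.2 ∧ p.2 ≤ n}

/-- The polynomial algebra `X[m,n] = F₂[R_{ij} : m ≤ i < j ≤ n]`. -/
abbrev XmnAlg (m n : ℕ) : Type := MvPolynomial (SigmaXmn m n) (ZMod 2)

/-- The generator `R_{ij}` of `X[m,n]` (zero outside the allowed index range). -/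
noncomputable def RgenMN (m n i j : ℕ) : XmnAlg m n :=
  if h : m ≤ i ∧ i < j ∧ j ≤ n then X ⟨(i, j), h⟩ else 0

/-- The differential of `X[m,n]`: `d R_{ij} = ∑_{i<k<j} R_{ik} R_{kj}`, extended as a
derivation. -/
noncomputable def dXmn (m n : ℕ) : Derivation (ZMod 2) (XmnAlg m n) (XmnAlg m n) :=
  mkDerivation (ZMod 2)
    (fun p : SigmaXmn m n =>
      ∑ k ∈ Finset.Ioo p.1.1 p.1.2, RgenMN m n p.1.1 k * RgenMN m n k p.1.2)

/-- The inclusion `X[m,n] → X`. -/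
noncomputable def inclMN (m n : ℕ) : XmnAlg m n →ₐ[ZMod 2] Xalg :=
  rename (fun p : SigmaXmn m n => (⟨p.1, p.2.2.1⟩ : SigmaX))

/-- The retraction `r : X → X[m,n]`, `R_{ij} ↦ R_{ij}` if `m ≤ i < j ≤ n` and `R_{ij} ↦ 0`
otherwise. -/
noncomputable def retrMN (m n : ℕ) : Xalg →ₐ[ZMod 2] XmnAlg m n :=
  aeval (fun p : SigmaX => RgenMN m n p.1.1 p.1.2)

/-!
`d ∘ r` and `r ∘ d` are both derivations along the algebra map `r`, so it suffices to compare
them on a generator `R_{ij}`. If `m ≤ i < j ≤ n`, every term `R_{ik} R_{kj}` of `d R_{ij}` has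
`k ∈ [m, n]` and survives `r`; otherwise `r R_{ij} = 0` and every term of `d R_{ij}` has a factor
killed by `r`. Injectivity in homology is then formal: if `ι y = d x`, then `y = r ι y = d (r x)`.
-/

theorem Function.LeftInverse.exists_eq_of_semiconj {α β : Type*} {ι : β → α} {r : α → β}
    {d : α → α} {d' : β → β} (hr : Function.LeftInverse r ι) (hd : Function.Semiconj r d d')
    {y : β} (hy : ∃ x, d x = ι y) : ∃ z, d' z = y := by
  obtain ⟨x, hx⟩ := hy
  exact ⟨r x, by rw [← hd, hx, hr]⟩

theorem MvPolynomial.derivation_map_eq_map_derivation {R σ A : Type*} [CommSemiring R]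
    [CommSemiring A] [Algebra R A] (f : MvPolynomial σ R →ₐ[R] A)
    (D : Derivation R A A) (D' : Derivation R (MvPolynomial σ R) (MvPolynomial σ R))
    (h : ∀ s, D (f (X s)) = f (D' (X s))) (p : MvPolynomial σ R) :
    D (f p) = f (D' p) := by
  induction p using MvPolynomial.induction_on with
  | C a => rw [← algebraMap_eq, AlgHom.commutes, D.map_algebraMap, D'.map_algebraMap, map_zero]
  | add p q hp hq => rw [map_add, map_add, map_add, map_add, hp, hq]
  | mul_X p s hp =>
    simp only [map_mul, Derivation.leibniz, map_add, smul_eq_mul]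
    rw [hp, h]

theorem retrMN_Rgen (m n i j : ℕ) : retrMN m n (Rgen i j) = RgenMN m n i j := by
  unfold Rgen
  split_ifs with h
  · exact aeval_X _ _
  · rw [map_zero, RgenMN, dif_neg fun h' => h h'.2.1]

theorem retrMN_inclMN (m n : ℕ) (y : XmnAlg m n) : retrMN m n (inclMN m n y) = y := by
  have hcomp : (retrMN m n).comp (inclMN m n) = AlgHom.id (ZMod 2) (XmnAlg m n) := by
    refine MvPolynomial.algHom_ext fun p => ?_
    simp only [AlgHom.comp_apply, inclMN, rename_X, retrMN, aeval_X, AlgHom.id_apply]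
    exact dif_pos p.2
  exact DFunLike.congr_fun hcomp y

/-- Also valid for indices outside `[m, n]`, where both sides vanish. -/
theorem dXmn_RgenMN (m n i j : ℕ) (hij : i < j) :
    dXmn m n (RgenMN m n i j) = ∑ k ∈ Ioo i j, RgenMN m n i k * RgenMN m n k j := by
  unfold RgenMN
  split_ifs with h
  · exact mkDerivation_X _ _ _
  · rw [map_zero, eq_comm]
    refine sum_eq_zero fun k _ => ?_
    rcases (by omega : ¬ m ≤ i ∨ ¬ j ≤ n) with h' | h'
    · rw [dif_neg fun hc => h' hc.1, zero_mul]
    · rw [dif_neg fun hc : m ≤ k ∧ k < j ∧ j ≤ n => h' hc.2.2, mul_zero]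

theorem dXmn_retrMN (m n : ℕ) (x : Xalg) : dXmn m n (retrMN m n x) = retrMN m n (dX x) := by
  refine derivation_map_eq_map_derivation _ _ _ (fun s => ?_) x
  have hX : X s = Rgen s.1.1 s.1.2 := by rw [Rgen, dif_pos s.2]
  rw [hX, retrMN_Rgen, dXmn_RgenMN m n _ _ s.2, ← hX, dX, mkDerivation_X, map_sum]
  exact sum_congr rfl fun k _ => by rw [map_mul, retrMN_Rgen, retrMN_Rgen]

/-- `r` is a retraction of differential graded algebras: it restricts to the identity on
`X[m,n]` and commutes with the differentials; consequently the induced map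
`HX[m,n] → HX` in homology is injective. -/
theorem retrMN_is_dga_retraction (m n : ℕ) :
    (∀ y : XmnAlg m n, retrMN m n (inclMN m n y) = y) ∧
    (∀ x : Xalg, dXmn m n (retrMN m n x) = retrMN m n (dX x)) ∧
    (∀ y : XmnAlg m n, dXmn m n y = 0 → (∃ x : Xalg, dX x = inclMN m n y) →
      ∃ z : XmnAlg m n, dXmn m n z = y) :=
  ⟨retrMN_inclMN m n, dXmn_retrMN m n, fun _ _ =>
    Function.LeftInverse.exists_eq_of_semiconj (retrMN_inclMN m n)
      fun x => (dXmn_retrMN m n x).symm⟩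
end

section
/- Let G be a Gröbner basis of an ideal I in P = F_2[x_1,…,x_n] with respect to an admissible monomial ordering. If the leading monomial of every element of G is square free, then the quotient ring R = P/I is nilpotent free: for every r ∈ R and every k ≥ 1, r^k = 0 implies r = 0 (equivalently, x ≠ 0 implies x^m ≠ 0 for all m). -/
/-! Since the leading monomials are square free, `m ↦ m + m` maps standard monomials injectively
to standard monomials, i.e. squaring maps the monomial basis of `P/I` injectively into itself.
In characteristic two squaring is additive, so `r ^ 2 = ∑ cₘ ^ 2 • x ^ (2m)` where `r = ∑ cₘ • x ^ m`,
and linear independence forces every `cₘ` to vanish when `r ^ 2 = 0`. -/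

open MvPolynomial

/-- The leading monomial of a polynomial with respect to a linear order `ord` on monomials
(exponent vectors); by convention `LM 0 = 0`. -/
noncomputable def LM (n : ℕ) (ord : LinearOrder (Fin n →₀ ℕ))
    (f : MvPolynomial (Fin n) (ZMod 2)) : Fin n →₀ ℕ :=
  if h : f = 0 then 0 else @Finset.max' _ ord f.support (by
    rw [Finset.nonempty_iff_ne_empty]
    simpa [MvPolynomial.support_eq_empty] using h)

theorem Finsupp.le_of_le_add_self_of_le_one {ι : Type*} {a m : ι →₀ ℕ} (ha : ∀ i, a i ≤ 1)
    (h : a ≤ m + m) : a ≤ m := fun i => by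
  have := h i
  have := ha i
  simp only [Finsupp.add_apply] at *
  omega

theorem Finsupp.add_self_injective {ι : Type*} :
    Function.Injective fun m : ι →₀ ℕ => m + m := fun a c h =>
  Finsupp.ext fun i => by
    have := DFunLike.congr_fun h i
    simp only [Finsupp.add_apply] at this
    omega

section FrobeniusPermutesBasis

variable {ι K R : Type*} [CommRing R] (p : ℕ)

theorem Module.Basis.eq_zero_of_pow_char_eq_zero [CommRing K] [IsReduced K] [Algebra K R]
    [ExpChar R p] (b : Module.Basis ι K R)
    {d : ι → ι} (hd : Function.Injective d) (hb : ∀ i, b i ^ p = b (d i)) {r : R}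
    (hr : r ^ p = 0) : r = 0 := by
  set c := b.repr r
  have hsum : ∑ i ∈ c.support, c i • b i = r := by
    simpa [Finsupp.linearCombination_apply, Finsupp.sum] using b.linearCombination_repr r
  have hfrob : ∑ i ∈ c.support, c i ^ p • (b ∘ d) i = 0 := by
    rw [← hr, ← hsum, sum_pow_char]
    exact Finset.sum_congr rfl fun i _ => by rw [smul_pow, hb, Function.comp_apply]
  have hcp := linearIndependent_iff'.mp (b.linearIndependent.comp d hd) _ _ hfrob
  refine b.repr.map_eq_zero_iff.mp (Finsupp.ext fun i => ?_)
  by_cases hi : i ∈ c.support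
  · exact IsNilpotent.eq_zero ⟨p, hcp i hi⟩
  · exact Finsupp.notMem_support_iff.mp hi

theorem Module.Basis.isReduced_of_pow_char [Field K] [Algebra K R] [Fact p.Prime] [CharP K p]
    (b : Module.Basis ι K R) {d : ι → ι}
    (hd : Function.Injective d) (hb : ∀ i, b i ^ p = b (d i)) : IsReduced R := by
  rcases subsingleton_or_nontrivial R with _ | _
  · infer_instance
  have : CharP R p := charP_of_injective_algebraMap (algebraMap K R).injective p
  exact (isReduced_iff_pow_one_lt p (Fact.out : p.Prime).one_lt).mpr
    fun _ => b.eq_zero_of_pow_char_eq_zero p hd hb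

end FrobeniusPermutesBasis

theorem groebner_squarefree_nilpotentFree_general (n : ℕ)
    (ord : LinearOrder (Fin n →₀ ℕ))
    (I : Ideal (MvPolynomial (Fin n) (ZMod 2)))
    (G : Finset (MvPolynomial (Fin n) (ZMod 2)))
    (hbasis : ∃ b : Module.Basis {m : Fin n →₀ ℕ // ∀ g ∈ G, ¬ LM n ord g ≤ m} (ZMod 2)
        (MvPolynomial (Fin n) (ZMod 2) ⧸ I),
        ∀ m, b m = Ideal.Quotient.mk I (monomial m.1 1))
    (hsqfree : ∀ g ∈ G, ∀ i : Fin n, LM n ord g i ≤ 1) :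
    ∀ r : MvPolynomial (Fin n) (ZMod 2) ⧸ I, ∀ k : ℕ, 1 ≤ k → r ^ k = 0 → r = 0 := by
  obtain ⟨b, hb⟩ := hbasis
  let double (m : {m : Fin n →₀ ℕ // ∀ g ∈ G, ¬ LM n ord g ≤ m}) :
      {m : Fin n →₀ ℕ // ∀ g ∈ G, ¬ LM n ord g ≤ m} :=
    ⟨m.1 + m.1, fun g hg hle => m.2 g hg (Finsupp.le_of_le_add_self_of_le_one (hsqfree g hg) hle)⟩
  have hdouble : Function.Injective double := fun a c h =>
    Subtype.ext (Finsupp.add_self_injective (congrArg Subtype.val h))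
  have hsq : ∀ m, b m ^ 2 = b (double m) := fun m => by
    rw [hb, hb, sq, ← map_mul, monomial_mul, one_mul]
  have := b.isReduced_of_pow_char 2 hdouble hsq
  exact fun r k _ hr => IsNilpotent.eq_zero ⟨k, hr⟩

/-- If `G` is a Gröbner basis of an ideal `I ⊆ F₂[x₁,…,x_n]` with respect to an admissible
monomial ordering, and every leading monomial of `G` is square free, then `P/I` is nilpotent
free.  Here a Gröbner basis is a generating set of `I` such that the monomials not divisible by
any `LM g`, `g ∈ G`, map to an `F₂`-basis of `P/I`; divisibility of monomials is the pointwise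
order `≤` on exponent vectors. -/
theorem groebner_squarefree_nilpotentFree (n : ℕ)
    (ord : LinearOrder (Fin n →₀ ℕ))
    (admissible : ∀ a b c : Fin n →₀ ℕ, ord.le a b → ord.le (a + c) (b + c))
    (I : Ideal (MvPolynomial (Fin n) (ZMod 2)))
    (G : Finset (MvPolynomial (Fin n) (ZMod 2)))
    (hG0 : (0 : MvPolynomial (Fin n) (ZMod 2)) ∉ G)
    (hspan : Ideal.span (G : Set (MvPolynomial (Fin n) (ZMod 2))) = I)
    (hbasis : ∃ b : Module.Basis {m : Fin n →₀ ℕ // ∀ g ∈ G, ¬ LM n ord g ≤ m} (ZMod 2)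
        (MvPolynomial (Fin n) (ZMod 2) ⧸ I),
        ∀ m, b m = Ideal.Quotient.mk I (monomial m.1 1))
    (hsqfree : ∀ g ∈ G, ∀ i : Fin n, LM n ord g i ≤ 1) :
    ∀ r : MvPolynomial (Fin n) (ZMod 2) ⧸ I, ∀ k : ℕ, 1 ≤ k → r ^ k = 0 → r = 0 :=
  groebner_squarefree_nilpotentFree_general n ord I G hbasis hsqfree
end
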